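/- Let ω > 0 and M ≥ 0. There exists N₂ = N₂(ω, M) > 0 such that for every x, e ∈ ℝ³ with ‖e‖ ≤ M and d_r(x) > N₂, setting v = F_ω(x) + e, for every ξ > 0 the traveled distance satisfies D_{x,v}^ω( 2·max{2, ξ} / (ω √(d_r(x))) ) ≥ ξ. -/

import Mathlib

/-! Since `Frot ω` is linear, the velocity relative to the medium at time `s` is
`e - s • Frot ω v`, where `v = Frot ω x + e`, so it has norm at least
`s * ω * (ω * dr x - M) - M`. Integrating gives a lower bound quadratic in `t`; at
`t = 2 * max 2 ξ / (ω * √(dr x))` its leading term is of order `2 * (max 2 ξ) ^ 2`, and the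
error terms are at most a quarter of it once `√(dr x) > max 1 (4 * M / ω)`. -/

noncomputable def vec3 (a b c : ℝ) : EuclideanSpace ℝ (Fin 3) := WithLp.toLp 2 ![a, b, c]

noncomputable def Frot (ω : ℝ) (y : EuclideanSpace ℝ (Fin 3)) : EuclideanSpace ℝ (Fin 3) :=
  vec3 (-ω * y 1) (ω * y 0) 0

noncomputable def dr (x : EuclideanSpace ℝ (Fin 3)) : ℝ :=
  Real.sqrt (x 0 ^ 2 + x 1 ^ 2)

noncomputable def Dtrav (ω : ℝ) (x v : EuclideanSpace ℝ (Fin 3)) (t : ℝ) : ℝ :=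
  ∫ s in (0 : ℝ)..t, ‖v - Frot ω (x + s • v)‖

lemma norm_vec3 (a b c : ℝ) : ‖vec3 a b c‖ = Real.sqrt (a ^ 2 + b ^ 2 + c ^ 2) := by
  simp [EuclideanSpace.norm_eq, vec3, Fin.sum_univ_three, sq_abs]

lemma Frot_add (ω : ℝ) (y z : EuclideanSpace ℝ (Fin 3)) :
    Frot ω (y + z) = Frot ω y + Frot ω z := by
  ext i
  fin_cases i <;> simp [Frot, vec3] <;> ring

lemma Frot_smul (ω s : ℝ) (y : EuclideanSpace ℝ (Fin 3)) :
    Frot ω (s • y) = s • Frot ω y := by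
  ext i
  fin_cases i <;> simp [Frot, vec3] <;> ring

lemma norm_Frot (ω : ℝ) (y : EuclideanSpace ℝ (Fin 3)) : ‖Frot ω y‖ = |ω| * dr y := by
  rw [Frot, norm_vec3, dr, ← Real.sqrt_sq_eq_abs, ← Real.sqrt_mul (sq_nonneg ω)]
  ring_nf

lemma dr_Frot (ω : ℝ) (y : EuclideanSpace ℝ (Fin 3)) : dr (Frot ω y) = |ω| * dr y := by
  rw [← norm_Frot, Frot, norm_vec3, dr]
  simp [vec3]

lemma dr_nonneg (y : EuclideanSpace ℝ (Fin 3)) : 0 ≤ dr y := Real.sqrt_nonneg _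

lemma dr_le_norm (y : EuclideanSpace ℝ (Fin 3)) : dr y ≤ ‖y‖ := by
  rw [dr, EuclideanSpace.norm_eq, Fin.sum_univ_three]
  apply Real.sqrt_le_sqrt
  simp only [Real.norm_eq_abs, sq_abs]
  nlinarith [sq_nonneg (y 2)]

lemma Dtrav_Frot_add (ω t : ℝ) (x e : EuclideanSpace ℝ (Fin 3)) :
    Dtrav ω x (Frot ω x + e) t = ∫ s in (0 : ℝ)..t, ‖e - s • Frot ω (Frot ω x + e)‖ := by
  unfold Dtrav
  congr 1
  ext s
  rw [Frot_add ω x, Frot_smul]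
  abel_nf

lemma norm_Frot_Frot_add_ge {ω : ℝ} (hω : 0 ≤ ω) (x e : EuclideanSpace ℝ (Fin 3)) :
    ω * (ω * dr x - ‖e‖) ≤ ‖Frot ω (Frot ω x + e)‖ := by
  have hFe : ‖Frot ω e‖ ≤ ω * ‖e‖ := by
    rw [norm_Frot, abs_of_nonneg hω]
    exact mul_le_mul_of_nonneg_left (dr_le_norm e) hω
  calc ω * (ω * dr x - ‖e‖) ≤ ‖Frot ω (Frot ω x)‖ - ‖Frot ω e‖ := by
        rw [norm_Frot, dr_Frot, abs_of_nonneg hω]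
        linarith
    _ ≤ ‖Frot ω (Frot ω x + e)‖ := by
        rw [Frot_add]
        exact norm_sub_le_norm_add _ _

lemma integral_norm_sub_smul_ge {E : Type*} [NormedAddCommGroup E] [NormedSpace ℝ E]
    (a b : E) {T : ℝ} (hT : 0 ≤ T) :
    ‖b‖ * T ^ 2 / 2 - ‖a‖ * T ≤ ∫ s in (0 : ℝ)..T, ‖a - s • b‖ := by
  have hlin : ∫ s in (0 : ℝ)..T, (s * ‖b‖ - ‖a‖) = ‖b‖ * T ^ 2 / 2 - ‖a‖ * T := by
    rw [intervalIntegral.integral_sub ((continuous_mul_const ‖b‖).intervalIntegrable _ _)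
      intervalIntegrable_const, intervalIntegral.integral_mul_const, integral_id,
      intervalIntegral.integral_const, smul_eq_mul]
    ring
  rw [← hlin]
  refine intervalIntegral.integral_mono_on hT (Continuous.intervalIntegrable (by fun_prop) _ _)
    (Continuous.intervalIntegrable (by fun_prop) _ _) fun s hs => ?_
  calc s * ‖b‖ - ‖a‖ = ‖s • b‖ - ‖a‖ := by rw [norm_smul, Real.norm_of_nonneg hs.1]
    _ ≤ ‖a - s • b‖ := by rw [norm_sub_rev]; exact norm_sub_norm_le _ _

lemma le_travel_lower_bound {ω M s m : ℝ} (hω : 0 < ω) (hs : 1 ≤ s) (hMs : 4 * M < ω * s)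
    (hm : 2 ≤ m) :
    m ≤ ω * (ω * s ^ 2 - M) * (2 * m / (ω * s)) ^ 2 / 2 - M * (2 * m / (ω * s)) := by
  have hωs : 0 < ω * s := by positivity
  have hMs2 : 4 * M ≤ ω * s ^ 2 := by nlinarith
  have key : ω * (ω * s ^ 2 - M) * (2 * m / (ω * s)) ^ 2 / 2 - M * (2 * m / (ω * s))
      = 2 * m ^ 2 * (1 - M / (ω * s ^ 2)) - 2 * m * (M / (ω * s)) := by
    field_simp
  have h1 : M / (ω * s ^ 2) ≤ 1 / 4 := by rw [div_le_iff₀ (by positivity)]; linarith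
  have h2 : M / (ω * s) ≤ 1 / 4 := by rw [div_le_iff₀ hωs]; linarith
  rw [key]
  nlinarith

theorem stmt_7_general (ω M : ℝ) (hω : 0 < ω) :
    ∃ N₂ : ℝ, 0 < N₂ ∧
      ∀ x e : EuclideanSpace ℝ (Fin 3), ‖e‖ ≤ M → dr x > N₂ →
        ∀ ξ : ℝ, 0 < ξ →
          Dtrav ω x (Frot ω x + e) (2 * max 2 ξ / (ω * Real.sqrt (dr x))) ≥ ξ := by
  refine ⟨1 + (4 * M / ω) ^ 2, by positivity, fun x e he hx ξ _ => ?_⟩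
  have hs : 1 ≤ √(dr x) := Real.one_le_sqrt.mpr (by nlinarith [sq_nonneg (4 * M / ω)])
  have hMs : 4 * M < ω * √(dr x) :=
    (div_lt_iff₀' hω).mp (Real.lt_sqrt_of_sq_lt (by linarith))
  set T := 2 * max 2 ξ / (ω * √(dr x))
  have hT : 0 ≤ T := by positivity
  rw [Dtrav_Frot_add, ge_iff_le]
  calc ξ ≤ max 2 ξ := le_max_right _ _
    _ ≤ ω * (ω * √(dr x) ^ 2 - M) * T ^ 2 / 2 - M * T :=
        le_travel_lower_bound hω hs hMs (le_max_left _ _)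
    _ ≤ ‖Frot ω (Frot ω x + e)‖ * T ^ 2 / 2 - ‖e‖ * T := by
        rw [Real.sq_sqrt (dr_nonneg x)]
        gcongr
        exact (mul_le_mul_of_nonneg_left (by linarith) hω.le).trans
          (norm_Frot_Frot_add_ge hω.le x e)
    _ ≤ ∫ s in (0 : ℝ)..T, ‖e - s • Frot ω (Frot ω x + e)‖ := integral_norm_sub_smul_ge _ _ hT

theorem stmt_7 (ω M : ℝ) (hω : 0 < ω) (hM : 0 ≤ M) :
    ∃ N₂ : ℝ, 0 < N₂ ∧
      ∀ x e : EuclideanSpace ℝ (Fin 3), ‖e‖ ≤ M → dr x > N₂ →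
        ∀ ξ : ℝ, 0 < ξ →
          Dtrav ω x (Frot ω x + e) (2 * max 2 ξ / (ω * Real.sqrt (dr x))) ≥ ξ :=
  stmt_7_general ω M hω
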